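/- arXiv:2510.23425 — 5 statements merged into one kernel-verified Lean document; each statement's English description precedes it below -/
import Mathlib

section
/- Let U, V, W be real Hilbert spaces and let d1 : U → V and d2 : V → W be bounded linear maps such that d1 is injective, the range of d1 equals the kernel of d2, and the range of d2 is closed in W. Let J_V : V → V' be the Riesz map, J_V(v) = ⟨v, ·⟩_V, and let d2' : W' → V' be the Banach dual map of d2. Then V' admits the Helmholtz decomposition V' = range(d2') ⊕ J_V(d1(U)): every f ∈ V' can be written uniquely as f = g + J_V(d1(u)) with g ∈ range(d2') and u ∈ U, and the decomposition is orthogonal in the sense that ⟨J_V⁻¹(g), d1(u)⟩_V = 0. -/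
/-!
Through the Riesz map the decomposition is the orthogonal splitting `V = Kᗮ ⊕ K` of the closed
subspace `K = ker d2 = range d1`: a functional lies in `range d2'` exactly when it vanishes on
`K`, i.e. when its Riesz vector lies in `Kᗮ`. The nontrivial half of this is the closed range
theorem: by the open mapping theorem a functional vanishing on `ker d2` is bounded by a multiple
of `‖d2 x‖`, so it descends to a bounded functional on `range d2`, which Hahn–Banach extends to
`W`. Uniqueness comes from uniqueness of orthogonal projections and injectivity of `d1`.
-/

open InnerProductSpace

namespace ContinuousLinearMap

section Bound

variable {𝕜 E F G : Type*} [NontriviallyNormedField 𝕜]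
  [NormedAddCommGroup E] [NormedSpace 𝕜 E] [CompleteSpace E]
  [NormedAddCommGroup F] [NormedSpace 𝕜 F] [CompleteSpace F]
  [NormedAddCommGroup G] [NormedSpace 𝕜 G]

theorem exists_norm_le_mul_norm_of_isClosed_range (u : E →L[𝕜] F)
    (hu : IsClosed (LinearMap.range (u : E →ₗ[𝕜] F) : Set F)) (f : E →L[𝕜] G)
    (hf : LinearMap.ker (u : E →ₗ[𝕜] F) ≤ LinearMap.ker (f : E →ₗ[𝕜] G)) :
    ∃ C, ∀ x, ‖f x‖ ≤ C * ‖u x‖ := by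
  have : CompleteSpace (LinearMap.range (u : E →ₗ[𝕜] F)) := hu.completeSpace_coe
  have hsurj : Function.Surjective
      (u.codRestrict _ (LinearMap.mem_range_self (u : E →ₗ[𝕜] F))) := by
    rintro ⟨_, x, rfl⟩
    exact ⟨x, rfl⟩
  obtain ⟨C, -, hC⟩ := exists_preimage_norm_le _ hsurj
  refine ⟨‖f‖ * C, fun x => ?_⟩
  obtain ⟨y, hyx, hy⟩ := hC ⟨u x, LinearMap.mem_range_self (u : E →ₗ[𝕜] F) x⟩
  have hfy : f y = f x := by
    rw [← sub_eq_zero, ← map_sub]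
    exact hf (by simpa [sub_eq_zero] using congrArg Subtype.val hyx)
  calc ‖f x‖ = ‖f y‖ := by rw [hfy]
    _ ≤ ‖f‖ * ‖y‖ := f.le_opNorm y
    _ ≤ ‖f‖ * (C * ‖u x‖) := by gcongr; exact hy
    _ = ‖f‖ * C * ‖u x‖ := by ring

end Bound

variable {𝕜 E F : Type*} [RCLike 𝕜]
  [NormedAddCommGroup E] [NormedSpace 𝕜 E] [CompleteSpace E]
  [NormedAddCommGroup F] [NormedSpace 𝕜 F] [CompleteSpace F]

theorem exists_comp_eq_of_isClosed_range (u : E →L[𝕜] F)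
    (hu : IsClosed (LinearMap.range (u : E →ₗ[𝕜] F) : Set F)) (f : StrongDual 𝕜 E)
    (hf : LinearMap.ker (u : E →ₗ[𝕜] F) ≤ LinearMap.ker (f : E →ₗ[𝕜] 𝕜)) :
    ∃ g : StrongDual 𝕜 F, g.comp u = f := by
  have hbound := u.exists_norm_le_mul_norm_of_isClosed_range hu f hf
  obtain ⟨g, hg, -⟩ := exists_extension_norm_eq _
    ((f : E →ₗ[𝕜] 𝕜).compLeftInverse (u : E →ₗ[𝕜] F))
  refine ⟨g, ext fun x => ?_⟩
  exact (hg ⟨u x, x, rfl⟩).trans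
    (LinearMap.compLeftInverse_apply_of_bdd (f : E →ₗ[𝕜] 𝕜) _ hbound x (u x) rfl)

theorem exists_comp_eq_iff_of_isClosed_range (u : E →L[𝕜] F)
    (hu : IsClosed (LinearMap.range (u : E →ₗ[𝕜] F) : Set F)) (f : StrongDual 𝕜 E) :
    (∃ g : StrongDual 𝕜 F, g.comp u = f) ↔
      LinearMap.ker (u : E →ₗ[𝕜] F) ≤ LinearMap.ker (f : E →ₗ[𝕜] 𝕜) := by
  refine ⟨?_, u.exists_comp_eq_of_isClosed_range hu f⟩
  rintro ⟨g, rfl⟩ x hx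
  simp_all

end ContinuousLinearMap

theorem InnerProductSpace.toDual_symm_mem_orthogonal_iff {𝕜 E : Type*} [RCLike 𝕜]
    [NormedAddCommGroup E] [InnerProductSpace 𝕜 E] [CompleteSpace E] (K : Submodule 𝕜 E)
    (f : StrongDual 𝕜 E) :
    (toDual 𝕜 E).symm f ∈ Kᗮ ↔ K ≤ LinearMap.ker (f : E →ₗ[𝕜] 𝕜) := by
  simp only [Submodule.mem_orthogonal', toDual_symm_apply]
  rfl

theorem dual_helmholtz_decomposition_general {U V W : Type*}
    [NormedAddCommGroup U] [InnerProductSpace ℝ U]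
    [NormedAddCommGroup V] [InnerProductSpace ℝ V] [CompleteSpace V]
    [NormedAddCommGroup W] [InnerProductSpace ℝ W] [CompleteSpace W]
    (d1 : U →L[ℝ] V) (d2 : V →L[ℝ] W)
    (hinj : Function.Injective d1)
    (hex : LinearMap.range (d1 : U →ₗ[ℝ] V) = LinearMap.ker (d2 : V →ₗ[ℝ] W))
    (hclosed : IsClosed (LinearMap.range (d2 : V →ₗ[ℝ] W) : Set W)) :
    ∀ f : StrongDual ℝ V, ∃! p : StrongDual ℝ V × U,
      (∃ g : StrongDual ℝ W, g.comp d2 = p.1) ∧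
      f = p.1 + InnerProductSpace.toDual ℝ V (d1 p.2) ∧
      (inner ℝ ((InnerProductSpace.toDual ℝ V).symm p.1) (d1 p.2) : ℝ) = 0 := by
  intro f
  set K := LinearMap.ker (d2 : V →ₗ[ℝ] W)
  have : K.HasOrthogonalProjection := by
    have : CompleteSpace K := d2.isClosed_ker.completeSpace_coe
    infer_instance
  have mem_range_dual (g : StrongDual ℝ V) :
      (∃ h : StrongDual ℝ W, h.comp d2 = g) ↔ (toDual ℝ V).symm g ∈ Kᗮ := by
    rw [d2.exists_comp_eq_iff_of_isClosed_range hclosed, toDual_symm_mem_orthogonal_iff]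
  have hd1 (u : U) : d1 u ∈ K := hex ▸ LinearMap.mem_range_self _ u
  set v := (toDual ℝ V).symm f
  obtain ⟨u, hu⟩ : ∃ u, d1 u = K.starProjection v := hex.ge (K.starProjection_apply_mem v)
  have hv : v - d1 u ∈ Kᗮ := hu ▸ K.sub_starProjection_mem_orthogonal v
  refine ⟨(toDual ℝ V (v - d1 u), u), ⟨(mem_range_dual _).2 (by simpa using hv), ?_, ?_⟩, ?_⟩
  · rw [← map_add, sub_add_cancel, LinearIsometryEquiv.apply_symm_apply]
  · simpa using K.inner_left_of_mem_orthogonal (hd1 u) hv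
  · rintro ⟨g, u'⟩ ⟨hg, hf, -⟩
    have hvg : v = d1 u' + (toDual ℝ V).symm g := by simp [v, hf, add_comm]
    have hu' : u' = u := hinj <| hu ▸
      (K.eq_starProjection_of_mem_orthogonal' (hd1 u') ((mem_range_dual g).1 hg) hvg).symm
    subst hu'
    simp [v, hf]

/-- Helmholtz decomposition of the dual of `V` for a short exact Hilbert
sequence `0 → U →d1 V →d2 W` with `d2` of closed range:
`V' = range(d2') ⊕ J_V(d1(U))`, where `J_V` is the Riesz map and `d2'` the Banach dual of
`d2`.  Every `f ∈ V'` is uniquely `f = g + J_V (d1 u)` with `g ∈ range d2'`, and the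
decomposition is orthogonal in the sense that `⟪J_V⁻¹ g, d1 u⟫ = 0`. -/
theorem dual_helmholtz_decomposition {U V W : Type*}
    [NormedAddCommGroup U] [InnerProductSpace ℝ U] [CompleteSpace U]
    [NormedAddCommGroup V] [InnerProductSpace ℝ V] [CompleteSpace V]
    [NormedAddCommGroup W] [InnerProductSpace ℝ W] [CompleteSpace W]
    (d1 : U →L[ℝ] V) (d2 : V →L[ℝ] W)
    (hinj : Function.Injective d1)
    (hex : LinearMap.range (d1 : U →ₗ[ℝ] V) = LinearMap.ker (d2 : V →ₗ[ℝ] W))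
    (hclosed : IsClosed (LinearMap.range (d2 : V →ₗ[ℝ] W) : Set W)) :
    ∀ f : StrongDual ℝ V, ∃! p : StrongDual ℝ V × U,
      (∃ g : StrongDual ℝ W, g.comp d2 = p.1) ∧
      f = p.1 + InnerProductSpace.toDual ℝ V (d1 p.2) ∧
      (inner ℝ ((InnerProductSpace.toDual ℝ V).symm p.1) (d1 p.2) : ℝ) = 0 :=
  dual_helmholtz_decomposition_general d1 d2 hinj hex hclosed
end

section
/- For every integer k ≥ 0, the space P_k(ℝ³; ℝ³) of vector fields with polynomial components of total degree at most k decomposes as the direct sum P_k(ℝ³; ℝ³) = ∇P_{k+1}(ℝ³) ⊕ (x × P_{k-1}(ℝ³; ℝ³)): the subspaces {∇p : p a polynomial of total degree ≤ k+1} and {x × q : q a polynomial vector field with components of total degree ≤ k−1} together span P_k(ℝ³; ℝ³), and their intersection is {0}. -/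
open MvPolynomial

noncomputable section

/-- `degLE p m` means `p ∈ P_m`: either `p = 0` or the total degree of `p` is at most `m`
(with the convention `P_{-1} = {0}`). -/
def degLE (p : MvPolynomial (Fin 3) ℝ) (m : ℤ) : Prop :=
  p = 0 ∨ (p.totalDegree : ℤ) ≤ m

/-- The formal gradient `∇p = (∂₁p, ∂₂p, ∂₃p)` of a polynomial in three variables. -/
def grad3 (p : MvPolynomial (Fin 3) ℝ) : Fin 3 → MvPolynomial (Fin 3) ℝ :=
  fun i => pderiv i p

/-- The pointwise cross product `x × q` of the identity vector field `x = (x₁,x₂,x₃)`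
with a polynomial vector field `q`. -/
def crossX (q : Fin 3 → MvPolynomial (Fin 3) ℝ) : Fin 3 → MvPolynomial (Fin 3) ℝ :=
  ![X 1 * q 2 - X 2 * q 1, X 2 * q 0 - X 0 * q 2, X 0 * q 1 - X 1 * q 0]

namespace GCAux

abbrev P3 := MvPolynomial (Fin 3) ℝ

def mdeg (s : Fin 3 →₀ ℕ) : ℕ := s.sum fun _ e => e

lemma mdeg_eq (s : Fin 3 →₀ ℕ) : mdeg s = ∑ j : Fin 3, s j :=
  Finsupp.sum_fintype _ _ (fun _ => rfl)

lemma mdeg_sub_single {s : Fin 3 →₀ ℕ} {i : Fin 3} (h : s i ≠ 0) :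
    mdeg (s - Finsupp.single i 1) + 1 = mdeg s := by
  simp only [mdeg_eq, Finsupp.tsub_apply, Finsupp.single_apply, Fin.sum_univ_three]
  fin_cases i <;> simp_all <;> omega

lemma mdeg_eq_zero {s : Fin 3 →₀ ℕ} (h : mdeg s = 0) : s = 0 := by
  rw [mdeg_eq, Fin.sum_univ_three] at h
  ext j; fin_cases j <;> simp <;> omega

/-- The "degree-weighted inverse" operator: divides each monomial by `deg + 1`. -/
def T (f : P3) : P3 := ∑ s ∈ f.support, monomial s (coeff s f / (mdeg s + 1))

lemma X_mul_pderiv_monomial (j : Fin 3) (s : Fin 3 →₀ ℕ) (a : ℝ) :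
    X j * pderiv j (monomial s a) = monomial s (a * s j) := by
  rw [pderiv_monomial]
  by_cases h : s j = 0
  · simp [h]
  · rw [X, monomial_mul, one_mul, add_tsub_cancel_of_le]
    exact Finsupp.single_le_iff.2 (Nat.one_le_iff_ne_zero.2 h)

lemma euler_monomial (s : Fin 3 →₀ ℕ) (a : ℝ) :
    ∑ j : Fin 3, X j * pderiv j (monomial s a) = monomial s (a * mdeg s) := by
  simp only [X_mul_pderiv_monomial]
  rw [← map_sum]
  congr 1
  rw [mdeg_eq]
  push_cast
  rw [Finset.mul_sum]

lemma euler_apply (f : P3) :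
    ∑ j : Fin 3, X j * pderiv j f = ∑ s ∈ f.support, monomial s (coeff s f * mdeg s) := by
  conv_lhs => rw [f.as_sum]
  simp only [map_sum, Finset.mul_sum]
  rw [Finset.sum_comm]
  exact Finset.sum_congr rfl fun s _ => euler_monomial s _

/-- Key identity: `x·∇(Tf) + Tf = f`. -/
lemma key (f : P3) :
    X 0 * pderiv 0 (T f) + X 1 * pderiv 1 (T f) + X 2 * pderiv 2 (T f) + T f = f := by
  have h0 : X 0 * pderiv 0 (T f) + X 1 * pderiv 1 (T f) + X 2 * pderiv 2 (T f)
      = ∑ j : Fin 3, X j * pderiv j (T f) := by rw [Fin.sum_univ_three]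
  rw [h0]
  have h1 : ∑ j : Fin 3, X j * pderiv j (T f)
      = ∑ s ∈ f.support, monomial s (coeff s f / (mdeg s + 1) * mdeg s) := by
    unfold T
    simp only [map_sum, Finset.mul_sum]
    rw [Finset.sum_comm]
    refine Finset.sum_congr rfl fun s _ => ?_
    rw [euler_monomial]
  rw [h1]
  unfold T
  rw [← Finset.sum_add_distrib]
  conv_rhs => rw [f.as_sum]
  refine Finset.sum_congr rfl fun s hs => ?_
  rw [← map_add]
  congr 1
  have hd : ((mdeg s : ℝ) + 1) ≠ 0 := by positivity
  field_simp

lemma totalDegree_T_le (f : P3) : (T f).totalDegree ≤ f.totalDegree := by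
  refine (totalDegree_finset_sum _ _).trans (Finset.sup_le fun s hs => ?_)
  exact (totalDegree_monomial_le _ _).trans (le_totalDegree hs)

lemma pderiv_support {i : Fin 3} {f : P3} {t : Fin 3 →₀ ℕ}
    (ht : t ∈ (pderiv i f).support) : mdeg t + 1 ≤ f.totalDegree := by
  have hrep : pderiv i f
      = ∑ s ∈ f.support, monomial (s - Finsupp.single i 1) (coeff s f * s i) := by
    conv_lhs => rw [f.as_sum]
    rw [map_sum]
    exact Finset.sum_congr rfl fun s _ => pderiv_monomial
  rw [hrep] at ht
  obtain ⟨s, hs, hts⟩ := Finset.mem_biUnion.1 (MvPolynomial.support_sum ht)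
  by_cases hc : (coeff s f * (s i : ℝ)) = 0
  · rw [hc, map_zero, support_zero] at hts; exact absurd hts (Finset.notMem_empty t)
  · rw [support_monomial, if_neg hc] at hts
    have hsi : s i ≠ 0 := by
      intro h0; apply hc; rw [h0]; simp
    have := Finset.mem_singleton.1 hts
    subst this
    calc mdeg (s - Finsupp.single i 1) + 1 = mdeg s := mdeg_sub_single hsi
      _ ≤ f.totalDegree := le_totalDegree hs

lemma degLE_pderiv {i : Fin 3} {f : P3} {n : ℕ} (h : f.totalDegree ≤ n) :
    degLE (pderiv i f) ((n : ℤ) - 1) := by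
  by_cases hz : pderiv i f = 0
  · exact Or.inl hz
  · right
    obtain ⟨t, ht, htd⟩ := Finset.exists_mem_eq_sup _
      (support_nonempty.2 hz) (fun s : Fin 3 →₀ ℕ => s.sum fun _ e => e)
    have h1 : (pderiv i f).totalDegree = mdeg t := htd
    have h2 := pderiv_support (i := i) ht
    omega

lemma degLE_sub {f g : P3} {m : ℤ} (hf : degLE f m) (hg : degLE g m) :
    degLE (f - g) m := by
  rcases hf with hf | hf <;> rcases hg with hg | hg
  · exact Or.inl (by rw [hf, hg, sub_zero])
  · right; rw [hf, zero_sub, totalDegree_neg]; exact hg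
  · right; rw [hg, sub_zero]; exact hf
  · right
    have hmax : (f - g).totalDegree ≤ max f.totalDegree g.totalDegree := totalDegree_sub f g
    rcases max_cases f.totalDegree g.totalDegree with ⟨he, _⟩ | ⟨he, _⟩ <;> rw [he] at hmax <;>
      [exact le_trans (Nat.cast_le.2 hmax) hf; exact le_trans (Nat.cast_le.2 hmax) hg]

lemma coeff_euler (p : P3) (t : Fin 3 →₀ ℕ) :
    coeff t (∑ j : Fin 3, X j * pderiv j p) = coeff t p * mdeg t := by
  rw [euler_apply, MvPolynomial.coeff_sum]
  simp only [coeff_monomial]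
  rw [Finset.sum_ite_eq' p.support t (fun s => coeff s p * (mdeg s : ℝ))]
  by_cases h : t ∈ p.support
  · rw [if_pos h]
  · rw [if_neg h, MvPolynomial.notMem_support_iff.1 h, zero_mul]

lemma grad_zero_of_euler_zero {p : P3}
    (h : X 0 * pderiv 0 p + X 1 * pderiv 1 p + X 2 * pderiv 2 p = 0) (i : Fin 3) :
    pderiv i p = 0 := by
  have hE : ∑ j : Fin 3, X j * pderiv j p = 0 := by rw [Fin.sum_univ_three]; exact h
  have hc : ∀ t, coeff t p * (mdeg t : ℝ) = 0 := fun t => by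
    rw [← coeff_euler, hE, coeff_zero]
  have hpC : p = C (coeff 0 p) := by
    apply MvPolynomial.ext
    intro t
    by_cases h0 : t = 0
    · subst h0; simp [coeff_C]
    · rw [coeff_C, if_neg (Ne.symm h0)]
      have hm : mdeg t ≠ 0 := fun hm => h0 (mdeg_eq_zero hm)
      have := hc t
      rcases mul_eq_zero.1 this with h' | h'
      · exact h'
      · exact absurd (Nat.cast_eq_zero.1 h') hm
  rw [hpC]
  exact pderiv_C

end GCAux

open GCAux

/-- For every `k ≥ 0`, `P_k(ℝ³;ℝ³) = ∇P_{k+1}(ℝ³) ⊕ (x × P_{k-1}(ℝ³;ℝ³))`: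
the two subspaces together span `P_k(ℝ³;ℝ³)` and their intersection is `{0}`. -/
theorem polynomial_decomposition_grad_cross (k : ℕ) :
    (∀ v : Fin 3 → MvPolynomial (Fin 3) ℝ, (∀ i, degLE (v i) (k : ℤ)) →
      ∃ (p : MvPolynomial (Fin 3) ℝ) (q : Fin 3 → MvPolynomial (Fin 3) ℝ),
        degLE p ((k : ℤ) + 1) ∧ (∀ i, degLE (q i) ((k : ℤ) - 1)) ∧
        v = fun i => grad3 p i + crossX q i) ∧
    (∀ v : Fin 3 → MvPolynomial (Fin 3) ℝ,
      (∃ p : MvPolynomial (Fin 3) ℝ, degLE p ((k : ℤ) + 1) ∧ v = grad3 p) →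
      (∃ q : Fin 3 → MvPolynomial (Fin 3) ℝ,
        (∀ i, degLE (q i) ((k : ℤ) - 1)) ∧ v = crossX q) →
      v = 0) := by
  constructor
  · intro v hv
    have hvd : ∀ j, (v j).totalDegree ≤ k := by
      intro j
      rcases hv j with h | h
      · rw [h, totalDegree_zero]; exact Nat.zero_le _
      · exact_mod_cast h
    have hud : ∀ j, (T (v j)).totalDegree ≤ k := fun j => (totalDegree_T_le _).trans (hvd j)
    refine ⟨X 0 * T (v 0) + X 1 * T (v 1) + X 2 * T (v 2),
      ![pderiv 2 (T (v 1)) - pderiv 1 (T (v 2)),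
        pderiv 0 (T (v 2)) - pderiv 2 (T (v 0)),
        pderiv 1 (T (v 0)) - pderiv 0 (T (v 1))], ?_, ?_, ?_⟩
    · right
      have h1 : ∀ j, (X j * T (v j)).totalDegree ≤ k + 1 := fun j =>
        (totalDegree_mul _ _).trans (by rw [totalDegree_X]; have := hud j; omega)
      have h2 : (X 0 * T (v 0) + X 1 * T (v 1) + X 2 * T (v 2)).totalDegree ≤ k + 1 :=
        le_trans (totalDegree_add _ _)
          (max_le (le_trans (totalDegree_add _ _) (max_le (h1 0) (h1 1))) (h1 2))
      calc ((X 0 * T (v 0) + X 1 * T (v 1) + X 2 * T (v 2)).totalDegree : ℤ)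
          ≤ ((k + 1 : ℕ) : ℤ) := Nat.cast_le.2 h2
        _ = (k : ℤ) + 1 := by push_cast; ring
    · intro i
      fin_cases i <;>
        simp only [Matrix.cons_val_zero, Matrix.cons_val_one, Matrix.head_cons,
          Matrix.cons_val_two, Matrix.tail_cons, Fin.isValue] <;>
        exact degLE_sub (degLE_pderiv (hud _)) (degLE_pderiv (hud _))
    · funext i
      fin_cases i <;>
        simp [grad3, crossX, map_add, pderiv_mul,
          pderiv_X_self, pderiv_X_of_ne (by decide : (1 : Fin 3) ≠ 0),
          pderiv_X_of_ne (by decide : (2 : Fin 3) ≠ 0),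
          pderiv_X_of_ne (by decide : (0 : Fin 3) ≠ 1),
          pderiv_X_of_ne (by decide : (2 : Fin 3) ≠ 1),
          pderiv_X_of_ne (by decide : (0 : Fin 3) ≠ 2),
          pderiv_X_of_ne (by decide : (1 : Fin 3) ≠ 2),
          one_mul, zero_mul]
      · linear_combination (key (v 0)).symm
      · linear_combination (key (v 1)).symm
      · linear_combination (key (v 2)).symm
  · rintro v ⟨p, hp, rfl⟩ ⟨q, hq, hgq⟩
    have h0 := congrFun hgq 0
    have h1 := congrFun hgq 1
    have h2 := congrFun hgq 2
    simp only [grad3, crossX, Matrix.cons_val_zero, Matrix.cons_val_one, Matrix.head_cons,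
      Matrix.cons_val_two, Matrix.tail_cons, Fin.isValue] at h0 h1 h2
    have hE : X 0 * pderiv 0 p + X 1 * pderiv 1 p + X 2 * pderiv 2 p = 0 := by
      linear_combination X 0 * h0 + X 1 * h1 + X 2 * h2
    funext i
    show pderiv i p = 0
    exact grad_zero_of_euler_zero hE i

end
end

section
/- For every integer k ≥ 0, the space P_k(ℝ²; ℝ²) of planar vector fields with polynomial components of total degree at most k decomposes as the direct sum P_k(ℝ²; ℝ²) = (rot⃗ P_{k+1}(ℝ²)) ⊕ (x · P_{k-1}(ℝ²)): the subspaces {(∂₂q, −∂₁q) : q a polynomial of total degree ≤ k+1} and {x p : p a polynomial of total degree ≤ k−1} together span P_k(ℝ²; ℝ²), and their intersection is {0}. -/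
/-!
Write `E = ∑ᵢ xᵢ ∂ᵢ` for the Euler operator, which multiplies every monomial by its degree.
A direct computation gives `rot⃗ (x₂a - x₁b) + x (∂₁a + ∂₂b) = ((1 + E) a, (1 + E) b)`, and `1 + E`
is inverted by rescaling coefficients, which does not raise degrees: this gives the spanning.
If `rot⃗ q = x p`, taking divergences gives `0 = (2 + E) p`, hence `p = 0`.
-/

open MvPolynomial

noncomputable section

/-- `degLE2 p m` means `p ∈ P_m(ℝ²)`: either `p = 0` or the total degree of `p` is at
most `m` (with the convention `P_{-1} = {0}`). -/
def degLE2 (p : MvPolynomial (Fin 2) ℝ) (m : ℤ) : Prop :=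
  p = 0 ∨ (p.totalDegree : ℤ) ≤ m

/-- The two-dimensional vector curl `rot⃗ q = (∂₂q, −∂₁q)` of a scalar polynomial. -/
def rotVec (q : MvPolynomial (Fin 2) ℝ) : Fin 2 → MvPolynomial (Fin 2) ℝ :=
  ![pderiv 1 q, -(pderiv 0 q)]

/-- The planar vector field `x p = (x₁p, x₂p)`. -/
def xMul2 (p : MvPolynomial (Fin 2) ℝ) : Fin 2 → MvPolynomial (Fin 2) ℝ :=
  fun i => X i * p

namespace MvPolynomial
variable {σ R : Type*}

section CommSemiring
variable [CommSemiring R]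

theorem coeff_X_mul_pderiv (i : σ) (p : MvPolynomial σ R) (m : σ →₀ ℕ) :
    coeff m (X i * pderiv i p) = m i * coeff m p := by
  classical
  induction p using induction_on' with
  | monomial n r =>
    rw [X_mul_pderiv_monomial, coeff_smul, coeff_monomial]
    split_ifs with h <;> simp [h, nsmul_eq_mul]
  | add p q hp hq => simp only [mul_add, map_add, coeff_add, hp, hq]

theorem coeff_sum_X_mul_pderiv [Fintype σ] (p : MvPolynomial σ R) (m : σ →₀ ℕ) :
    coeff m (∑ i, X i * pderiv i p) = m.degree * coeff m p := by
  simp only [coeff_sum, coeff_X_mul_pderiv, ← Finset.sum_mul, Finsupp.degree_eq_sum, Nat.cast_sum]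

theorem pderiv_X_mul (i : σ) (p : MvPolynomial σ R) :
    pderiv i (X i * p) = p + X i * pderiv i p := by
  rw [pderiv_mul, pderiv_X_self, one_mul]

theorem pderiv_pderiv_comm (i j : σ) (p : MvPolynomial σ R) :
    pderiv i (pderiv j p) = pderiv j (pderiv i p) := by
  classical
  ext m
  simp only [coeff_pderiv, add_right_comm m (Finsupp.single i 1)]
  rcases eq_or_ne i j with rfl | hij
  · rfl
  · simp [hij, hij.symm]
    ring

theorem totalDegree_pderiv_lt {i : σ} {p : MvPolynomial σ R} (h : pderiv i p ≠ 0) :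
    (pderiv i p).totalDegree < p.totalDegree := by
  obtain ⟨n, hn, hdeg⟩ := Finset.exists_mem_eq_sup _ (support_nonempty.2 h)
    fun s : σ →₀ ℕ => s.sum fun _ e => e
  have hmem : n + Finsupp.single i 1 ∈ p.support := by
    rw [mem_support_iff, coeff_pderiv] at hn
    exact mem_support_iff.2 (left_ne_zero_of_mul hn)
  have := le_totalDegree hmem
  rw [totalDegree, hdeg]
  rw [Finsupp.sum_add_index' (fun _ => rfl) (fun _ _ _ => rfl), Finsupp.sum_single_index rfl] at this
  omega

theorem eq_zero_of_nsmul_add_sum_X_mul_pderiv_eq_zero [Fintype σ] [NoZeroDivisors R]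
    [CharZero R] {c : ℕ} (hc : c ≠ 0) {p : MvPolynomial σ R}
    (h : c • p + ∑ i, X i * pderiv i p = 0) : p = 0 := by
  ext m
  have hm := congr(coeff m $h)
  rw [coeff_add, coeff_smul, coeff_sum_X_mul_pderiv, nsmul_eq_mul, ← add_mul, coeff_zero] at hm
  have hcm : (c + m.degree : R) ≠ 0 := by norm_cast; omega
  exact (mul_eq_zero.1 hm).resolve_left hcm

end CommSemiring

theorem exists_support_subset_add_sum_X_mul_pderiv_eq [Field R] [CharZero R] [Fintype σ]
    (f : MvPolynomial σ R) : ∃ g, g.support ⊆ f.support ∧ g + ∑ i, X i * pderiv i g = f := by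
  classical
  set g := ∑ m ∈ f.support, monomial m ((m.degree + 1 : R)⁻¹ * coeff m f)
  have hg : ∀ n, coeff n g = (n.degree + 1 : R)⁻¹ * coeff n f := by
    intro n
    simp +contextual [g, coeff_sum, coeff_monomial]
  refine ⟨g, fun n hn => ?_, ?_⟩
  · rw [mem_support_iff, hg] at hn
    exact mem_support_iff.2 (right_ne_zero_of_mul hn)
  · ext n
    have hn : (n.degree + 1 : R) ≠ 0 := Nat.cast_add_one_ne_zero _
    rw [coeff_add, coeff_sum_X_mul_pderiv, hg]
    field_simp
    ring

end MvPolynomial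

namespace degLE2

variable {p q : MvPolynomial (Fin 2) ℝ} {m : ℤ}

theorem of_support_subset (hq : degLE2 q m) (h : p.support ⊆ q.support) : degLE2 p m := by
  rcases hq with rfl | hq
  · left
    simpa using h
  · exact .inr ((Nat.cast_le.2 (totalDegree_le_of_support_subset h)).trans hq)

theorem add (hp : degLE2 p m) (hq : degLE2 q m) : degLE2 (p + q) m := by
  rcases hp with rfl | hp
  · simpa using hq
  rcases hq with rfl | hq
  · rw [add_zero]
    exact .inr hp
  exact .inr ((Nat.cast_le.2 (totalDegree_add p q)).trans (by simp [hp, hq]))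

theorem sub (hp : degLE2 p m) (hq : degLE2 q m) : degLE2 (p - q) m := by
  rcases hp with rfl | hp
  · simpa [degLE2] using hq
  rcases hq with rfl | hq
  · rw [sub_zero]
    exact .inr hp
  exact .inr ((Nat.cast_le.2 (totalDegree_sub p q)).trans (by simp [hp, hq]))

theorem X_mul (i : Fin 2) (hp : degLE2 p m) : degLE2 (X i * p) (m + 1) := by
  rcases hp with rfl | hp
  · simp [degLE2]
  refine .inr ((Nat.cast_le.2 (totalDegree_mul _ _)).trans ?_)
  rw [totalDegree_X]
  push_cast
  omega

theorem pderiv (i : Fin 2) (hp : degLE2 p m) : degLE2 (pderiv i p) (m - 1) := by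
  by_cases h : MvPolynomial.pderiv i p = 0
  · exact .inl h
  rcases hp with rfl | hp
  · simp at h
  have := totalDegree_pderiv_lt h
  exact .inr (by omega)

end degLE2

theorem rotVec_X_mul_sub_add_xMul2 (a b : MvPolynomial (Fin 2) ℝ) :
    rotVec (X 1 * a - X 0 * b) + xMul2 (pderiv 0 a + pderiv 1 b) =
      ![a + ∑ i, X i * pderiv i a, b + ∑ i, X i * pderiv i b] := by
  ext1 i
  fin_cases i <;>
    simp [rotVec, xMul2, Fin.sum_univ_two] <;> ring

theorem eq_zero_of_rotVec_eq_xMul2 {p q : MvPolynomial (Fin 2) ℝ} (h : rotVec q = xMul2 p) :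
    p = 0 := by
  have h0 : pderiv 1 q = X 0 * p := congrFun h 0
  have h1 : -pderiv 0 q = X 1 * p := congrFun h 1
  refine eq_zero_of_nsmul_add_sum_X_mul_pderiv_eq_zero two_ne_zero ?_
  calc 2 • p + ∑ i, X i * pderiv i p = pderiv 0 (X 0 * p) + pderiv 1 (X 1 * p) := by
        simp only [pderiv_X_mul, Fin.sum_univ_two]
        ring
    _ = pderiv 0 (pderiv 1 q) - pderiv 1 (pderiv 0 q) := by rw [← h0, ← h1, map_neg]; ring
    _ = 0 := by rw [pderiv_pderiv_comm, sub_self]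

/-- For every `k ≥ 0`,
`P_k(ℝ²;ℝ²) = (rot⃗ P_{k+1}(ℝ²)) ⊕ (x · P_{k-1}(ℝ²))`: the two subspaces together span
`P_k(ℝ²;ℝ²)` and their intersection is `{0}`. -/
theorem planar_polynomial_decomposition (k : ℕ) :
    (∀ v : Fin 2 → MvPolynomial (Fin 2) ℝ, (∀ i, degLE2 (v i) (k : ℤ)) →
      ∃ (q : MvPolynomial (Fin 2) ℝ) (p : MvPolynomial (Fin 2) ℝ),
        degLE2 q ((k : ℤ) + 1) ∧ degLE2 p ((k : ℤ) - 1) ∧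
        v = fun i => rotVec q i + xMul2 p i) ∧
    (∀ v : Fin 2 → MvPolynomial (Fin 2) ℝ,
      (∃ q : MvPolynomial (Fin 2) ℝ, degLE2 q ((k : ℤ) + 1) ∧ v = rotVec q) →
      (∃ p : MvPolynomial (Fin 2) ℝ, degLE2 p ((k : ℤ) - 1) ∧ v = xMul2 p) →
      v = 0) := by
  refine ⟨fun v hv => ?_, ?_⟩
  · obtain ⟨a, ha, hav⟩ := exists_support_subset_add_sum_X_mul_pderiv_eq (v 0)
    obtain ⟨b, hb, hbv⟩ := exists_support_subset_add_sum_X_mul_pderiv_eq (v 1)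
    have hak : degLE2 a k := (hv 0).of_support_subset ha
    have hbk : degLE2 b k := (hv 1).of_support_subset hb
    refine ⟨X 1 * a - X 0 * b, pderiv 0 a + pderiv 1 b, (hak.X_mul 1).sub (hbk.X_mul 0),
      (hak.pderiv 0).add (hbk.pderiv 1), ?_⟩
    have hsum := rotVec_X_mul_sub_add_xMul2 a b
    rw [hav, hbv] at hsum
    ext1 i
    fin_cases i
    · exact (congrFun hsum 0).symm
    · exact (congrFun hsum 1).symm
  · rintro v ⟨q, -, rfl⟩ ⟨p, -, h⟩
    rw [h, eq_zero_of_rotVec_eq_xMul2 h]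
    ext1 i
    simp [xMul2]

end
end

section
/- Let q = (q₁, q₂, q₃) be a triple of real polynomials in x₁, x₂, x₃. Then x × q = 0 identically (i.e., q₁x₂ = q₂x₁, q₂x₃ = q₃x₂, q₃x₁ = q₁x₃ as polynomial identities) if and only if there exists a real polynomial p with q = x p, i.e., qᵢ = xᵢ p for i = 1, 2, 3; moreover, if each qᵢ has total degree at most m and q ≠ 0, then p has total degree at most m − 1. -/
/-!
Writing `q = (q₁, q₂, q₃)`, the relation `x₁ q₂ = x₂ q₁` and the primality of `x₁` in the
domain `ℝ[x₁, x₂, x₃]` give `q₁ = x₁ p` and `q₂ = x₂ p`; cancelling `x₁` in `x₁ q₃ = x₃ q₁`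
then gives `q₃ = x₃ p`. Degrees add in a domain, so `deg q₁ = deg p + 1` when `p ≠ 0`.
-/

open MvPolynomial

noncomputable section

namespace MvPolynomial

variable {σ R : Type*} [CommRing R] [IsDomain R]

theorem exists_eq_X_mul_of_X_mul_eq_X_mul {i j : σ} (hij : i ≠ j) {a b : MvPolynomial σ R}
    (h : X i * a = X j * b) : ∃ p, a = X j * p ∧ b = X i * p := by
  have hdvd : (X i : MvPolynomial σ R) ∣ X j * b := ⟨a, h.symm⟩
  have hndvd : ¬ (X i : MvPolynomial σ R) ∣ X j := by rwa [X_dvd_X]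
  obtain ⟨p, rfl⟩ := (X_prime.dvd_mul.mp hdvd).resolve_left hndvd
  refine ⟨p, mul_left_cancel₀ (X_ne_zero i) ?_, rfl⟩
  rw [h, mul_left_comm]

theorem totalDegree_X_mul {p : MvPolynomial σ R} (hp : p ≠ 0) (i : σ) :
    (X i * p).totalDegree = p.totalDegree + 1 := by
  rw [totalDegree_mul_of_isDomain (X_ne_zero i) hp, totalDegree_X, add_comm]

end MvPolynomial

theorem eq_X_mul_of_crossX_eq_zero {q : Fin 3 → MvPolynomial (Fin 3) ℝ}
    (h : ∀ i, crossX q i = 0) : ∃ p : MvPolynomial (Fin 3) ℝ, ∀ i, q i = X i * p := by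
  have h₁ : X 0 * q 2 = X 2 * q 0 := (sub_eq_zero.mp (h 1)).symm
  have h₂ : X 0 * q 1 = X 1 * q 0 := sub_eq_zero.mp (h 2)
  obtain ⟨p, hq₁, hq₀⟩ := exists_eq_X_mul_of_X_mul_eq_X_mul (by decide) h₂
  have hq₂ : q 2 = X 2 * p :=
    mul_left_cancel₀ (X_ne_zero 0) (by rw [h₁, hq₀, mul_left_comm])
  exact ⟨p, fun i => by fin_cases i <;> assumption⟩

theorem crossX_X_mul (p : MvPolynomial (Fin 3) ℝ) (i : Fin 3) :
    crossX (fun j => X j * p) i = 0 := by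
  fin_cases i <;>
    simp only [crossX, Fin.isValue, Fin.zero_eta, Fin.mk_one, Fin.reduceFinMk, Matrix.cons_val,
      Matrix.cons_val_zero, Matrix.cons_val_one] <;> ring

/-- For a triple `q` of real polynomials in three variables,
`x × q = 0` identically iff `q = x p` for some polynomial `p`; moreover, if each `qᵢ`
has total degree at most `m` and `q ≠ 0`, then `p` has total degree at most `m − 1`. -/
theorem crossX_eq_zero_iff (q : Fin 3 → MvPolynomial (Fin 3) ℝ) :
    ((∀ i, crossX q i = 0) ↔ ∃ p : MvPolynomial (Fin 3) ℝ, ∀ i, q i = X i * p) ∧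
    (∀ (m : ℕ) (p : MvPolynomial (Fin 3) ℝ), (∀ i, q i = X i * p) →
      (∀ i, (q i).totalDegree ≤ m) → q ≠ 0 →
      (p.totalDegree : ℤ) ≤ (m : ℤ) - 1) := by
  refine ⟨⟨eq_X_mul_of_crossX_eq_zero, ?_⟩, ?_⟩
  · rintro ⟨p, hp⟩
    rw [funext hp]
    exact crossX_X_mul p
  · intro m p hp hdeg hq
    have hp₀ : p ≠ 0 := by
      rintro rfl
      exact hq (funext fun i => by simp [hp i])
    have hdeg₀ := hdeg 0
    rw [hp 0, totalDegree_X_mul hp₀] at hdeg₀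
    omega

end
end

section
/- For every integer m ≥ 0, the subspace {x × q : q ∈ P_m(ℝ³; ℝ³)} of polynomial vector fields has dimension 3·dim P_{m+1}(ℝ³) − dim P_{m+2}(ℝ³) + 1, where dim P_j(ℝ³) = (j+1)(j+2)(j+3)/6; equivalently, its dimension equals 3·dim P_m(ℝ³) − dim P_{m-1}(ℝ³). -/
set_option maxHeartbeats 1000000
set_option synthInstance.maxHeartbeats 400000


open MvPolynomial

noncomputable section

/-- The subspace `{x × q : q ∈ P_m(ℝ³;ℝ³)}` of polynomial vector fields (realized as
the span of the corresponding set, which is itself already a subspace). -/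
def crossSpace (m : ℕ) : Submodule ℝ (Fin 3 → MvPolynomial (Fin 3) ℝ) :=
  Submodule.span ℝ
    {v | ∃ q : Fin 3 → MvPolynomial (Fin 3) ℝ, (∀ i, (q i).totalDegree ≤ m) ∧ v = crossX q}

/-- `dP j = dim P_j(ℝ³) = (j+1)(j+2)(j+3)/6` for `j ≥ 0`, and `0` for `j < 0`. -/
def dP (j : ℤ) : ℤ :=
  if j < 0 then 0 else (j + 1) * (j + 2) * (j + 3) / 6

namespace CrossAux

abbrev P3 := MvPolynomial (Fin 3) ℝ

/-- `crossX` as a linear map. -/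
def Lcross : (Fin 3 → P3) →ₗ[ℝ] (Fin 3 → P3) where
  toFun := crossX
  map_add' q r := by
    funext i
    fin_cases i <;> simp [crossX] <;> ring
  map_smul' c q := by
    funext i
    fin_cases i <;> simp [crossX, smul_sub, mul_smul_comm]

/-- The restricted linear map from triples of polynomials of degree at most `m`. -/
def Lm (m : ℕ) : (∀ _ : Fin 3, restrictTotalDegree (Fin 3) ℝ m) →ₗ[ℝ] (Fin 3 → P3) :=
  Lcross.comp (LinearMap.pi fun i =>
    (restrictTotalDegree (Fin 3) ℝ m).subtype.comp (LinearMap.proj i))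

lemma Lm_apply (m : ℕ) (q : ∀ _ : Fin 3, restrictTotalDegree (Fin 3) ℝ m) :
    Lm m q = crossX (fun i => (q i : P3)) := rfl

lemma range_Lm (m : ℕ) : LinearMap.range (Lm m) = crossSpace m := by
  apply le_antisymm
  · rintro v ⟨q, rfl⟩
    apply Submodule.subset_span
    exact ⟨fun i => (q i : P3),
      fun i => (mem_restrictTotalDegree _ _ _).mp (q i).2, rfl⟩
  · rw [crossSpace, Submodule.span_le]
    rintro v ⟨q, hq, rfl⟩
    exact ⟨fun i => ⟨q i, (mem_restrictTotalDegree _ _ _).mpr (hq i)⟩, rfl⟩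

/-- dimension of `P_j(ℝ³)`. -/
def N (j : ℕ) : ℕ := Module.finrank ℝ (restrictTotalDegree (Fin 3) ℝ j)

/-- The counting equivalence: monomial exponents of total degree at most `j` in three
variables correspond to multisets of size `j` over four letters. -/
def countEquiv (j : ℕ) :
    {n : Fin 3 →₀ ℕ // n ∈ {n : Fin 3 →₀ ℕ | (n.sum fun _ e => e) ≤ j}} ≃ Sym (Fin 4) j := by
  refine Equiv.trans ?_ (Sym.equivNatSumOfFintype (Fin 4) j).symm
  have hsum : ∀ n : Fin 3 →₀ ℕ, (n.sum fun _ e => e) = ∑ i, n i := fun n =>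
    Finsupp.sum_fintype _ _ (fun _ => rfl)
  refine
    { toFun := fun n => ⟨Fin.cons (j - ∑ i, n.1 i) (fun i => n.1 i), ?_⟩
      invFun := fun P => ⟨Finsupp.equivFunOnFinite.symm (fun i : Fin 3 => P.1 i.succ), ?_⟩
      left_inv := ?_
      right_inv := ?_ }
  · have hn := n.2
    rw [Set.mem_setOf_eq, hsum] at hn
    rw [Fin.sum_univ_succ]
    simp only [Fin.cons_zero, Fin.cons_succ]
    omega
  · have hP := P.2
    rw [Set.mem_setOf_eq, hsum]
    have : ∀ i : Fin 3, (Finsupp.equivFunOnFinite.symm (fun i : Fin 3 => P.1 i.succ)) i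
        = P.1 i.succ := fun i => rfl
    simp only [this]
    rw [Fin.sum_univ_succ] at hP
    omega
  · intro n
    apply Subtype.ext
    apply Finsupp.ext
    intro i
    simp [Fin.cons_succ]
  · intro P
    apply Subtype.ext
    funext i
    refine Fin.cases ?_ (fun i => ?_) i
    · have hP := P.2
      rw [Fin.sum_univ_succ] at hP
      simp only [Fin.cons_zero]
      have : ∀ i : Fin 3, (Finsupp.equivFunOnFinite.symm (fun i : Fin 3 => P.1 i.succ)) i
          = P.1 i.succ := fun i => rfl
      simp only [this]
      omega
    · simp [Fin.cons_succ]

lemma N_eq (j : ℕ) : N j = (j + 3).choose 3 := by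
  classical
  haveI : Fintype {n : Fin 3 →₀ ℕ // n ∈ {n : Fin 3 →₀ ℕ | (n.sum fun _ e => e) ≤ j}} :=
    Fintype.ofEquiv _ (countEquiv j).symm
  have hb := Module.finrank_eq_card_basis
    (basisRestrictSupport ℝ {n : Fin 3 →₀ ℕ | (n.sum fun _ e => e) ≤ j})
  rw [N]
  rw [show restrictTotalDegree (Fin 3) ℝ j
      = restrictSupport ℝ {n : Fin 3 →₀ ℕ | (n.sum fun _ e => e) ≤ j} from rfl]
  rw [hb, Fintype.card_congr (countEquiv j), Sym.card_sym_eq_multichoose,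
    Nat.multichoose_eq]
  have h4 : Fintype.card (Fin 4) = 4 := by simp
  rw [h4]
  have : 4 + j - 1 = j + 3 := by omega
  rw [this]
  exact Nat.choose_symm_of_eq_add (by omega)

lemma two_mul_choose (k : ℕ) : 2 * (k + 2).choose 2 = (k + 1) * (k + 2) := by
  induction k with
  | zero => decide
  | succ k ih =>
    have : k + 1 + 2 = (k + 2) + 1 := by omega
    rw [this, Nat.choose_succ_succ (k + 2) 1, Nat.mul_add, ih, Nat.choose_one_right]
    ring

lemma six_mul_choose (k : ℕ) : 6 * (k + 3).choose 3 = (k + 1) * (k + 2) * (k + 3) := by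
  induction k with
  | zero => decide
  | succ k ih =>
    have : k + 1 + 3 = (k + 3) + 1 := by omega
    rw [this, Nat.choose_succ_succ (k + 3) 2, Nat.mul_add, ih]
    have h2 : 6 * (k + 3).choose 2 = 3 * (2 * (k + 1 + 2).choose 2) := by ring_nf
    rw [h2, two_mul_choose]
    ring

lemma dP_cast (j : ℕ) : dP (j : ℤ) = ((j + 3).choose 3 : ℤ) := by
  rw [dP, if_neg (by omega)]
  have h6 : ((j : ℤ) + 1) * ((j : ℤ) + 2) * ((j : ℤ) + 3) = 6 * ((j + 3).choose 3 : ℤ) := by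
    have h := six_mul_choose j
    have h' : ((6 * (j + 3).choose 3 : ℕ) : ℤ) = (((j + 1) * (j + 2) * (j + 3) : ℕ) : ℤ) := by
      exact_mod_cast congrArg (Nat.cast : ℕ → ℤ) h
    push_cast at h'
    linarith
  rw [h6, Int.mul_ediv_cancel_left _ (by norm_num)]

/-- Structure of the kernel of the cross product map. -/
lemma ker_struct (q : Fin 3 → P3) (h : crossX q = 0) :
    ∃ f : P3, (∀ i, q i = X i * f) ∧
      ∀ d : Fin 3 →₀ ℕ, coeff (Finsupp.single 0 1 + d) (q 0) = coeff d f := by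
  classical
  have e0 : X 1 * q 2 - X 2 * q 1 = 0 := congrFun h 0
  have e1 : X 2 * q 0 - X 0 * q 2 = 0 := congrFun h 1
  have e2 : X 0 * q 1 - X 1 * q 0 = 0 := congrFun h 2
  rw [sub_eq_zero] at e0 e1 e2
  have hz : ∀ d : Fin 3 →₀ ℕ, d 0 = 0 → coeff d (q 0) = 0 := by
    intro d hd
    have hc := congrArg (coeff (Finsupp.single (1 : Fin 3) 1 + d)) e2
    rw [coeff_X_mul] at hc
    rw [coeff_X_mul'] at hc
    rw [if_neg] at hc
    · exact hc.symm
    · simp [Finsupp.mem_support_iff, hd]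
  set s : Fin 3 →₀ ℕ := Finsupp.single 0 1 with hs
  have hmod : (q 0).modMonomial s = 0 := by
    apply MvPolynomial.ext
    intro d
    by_cases hle : s ≤ d
    · rw [coeff_modMonomial_of_le _ hle, coeff_zero]
    · rw [coeff_modMonomial_of_not_le _ hle, coeff_zero]
      apply hz
      rw [Finsupp.single_le_iff] at hle
      omega
  set f : P3 := (q 0).divMonomial s with hf
  have hq0 : q 0 = X 0 * f := by
    have hdm := divMonomial_add_modMonomial (q 0) s
    rw [hmod, add_zero] at hdm
    rw [← hdm]
    rfl
  have hq1 : q 1 = X 1 * f := by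
    apply mul_left_cancel₀ (X_ne_zero (R := ℝ) (0 : Fin 3))
    rw [e2, hq0]; ring
  have hq2 : q 2 = X 2 * f := by
    apply mul_left_cancel₀ (X_ne_zero (R := ℝ) (0 : Fin 3))
    rw [← e1, hq0]; ring
  refine ⟨f, ?_, ?_⟩
  · intro i
    fin_cases i
    · exact hq0
    · exact hq1
    · exact hq2
  · intro d
    rw [hq0]
    exact coeff_X_mul d 0 f

lemma sum_single_add (d : Fin 3 →₀ ℕ) :
    ((Finsupp.single (0 : Fin 3) 1 + d).sum fun _ e => e) = 1 + (d.sum fun _ e => e) := by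
  rw [Finsupp.sum_add_index' (fun _ => rfl) (fun _ _ _ => rfl),
    Finsupp.sum_single_index rfl]

lemma ker_zero : LinearMap.ker (Lm 0) = ⊥ := by
  rw [eq_bot_iff]
  rintro q hq
  simp only [LinearMap.mem_ker] at hq
  rw [Lm_apply] at hq
  obtain ⟨f, hfi, hc⟩ := ker_struct _ hq
  have hf0 : f = 0 := by
    by_contra hne
    obtain ⟨d, hd⟩ := ne_zero_iff.mp hne
    have hmem : (Finsupp.single (0 : Fin 3) 1 + d) ∈ ((q 0 : P3)).support := by
      rw [mem_support_iff, hc d]; exact hd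
    have hle := le_totalDegree hmem
    have hq0 : ((q 0 : P3)).totalDegree ≤ 0 :=
      (mem_restrictTotalDegree _ _ _).mp (q 0).2
    rw [sum_single_add] at hle
    omega
  have : ∀ i, (q i : P3) = 0 := by
    intro i
    rw [hfi i, hf0, mul_zero]
  simp only [Submodule.mem_bot]
  funext i
  exact Subtype.ext (by rw [this i]; rfl)

/-- The map realizing `P_k` as the kernel of `Lm (k+1)`. -/
def kerMap (k : ℕ) :
    restrictTotalDegree (Fin 3) ℝ k →ₗ[ℝ] LinearMap.ker (Lm (k + 1)) where
  toFun f :=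
    ⟨fun i => ⟨X i * (f : P3), by
        rw [mem_restrictTotalDegree]
        refine le_trans (totalDegree_mul _ _) ?_
        have hf := (mem_restrictTotalDegree _ _ _).mp f.2
        rw [totalDegree_X]
        omega⟩, by
      rw [LinearMap.mem_ker, Lm_apply]
      funext i
      fin_cases i <;> simp [crossX] <;> ring⟩
  map_add' f g := by
    apply Subtype.ext
    funext i
    apply Subtype.ext
    simp [mul_add]
  map_smul' c f := by
    apply Subtype.ext
    funext i
    apply Subtype.ext
    simp [mul_smul_comm]

lemma kerMap_bijective (k : ℕ) : Function.Bijective (kerMap k) := by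
  constructor
  · intro f g hfg
    have h0 : (X (0 : Fin 3) : P3) * (f : P3) = X 0 * (g : P3) := by
      have h1 := Subtype.ext_iff.mp hfg
      have h2 := congrFun h1 0
      have h3 := Subtype.ext_iff.mp h2
      simpa [kerMap] using h3
    exact Subtype.ext (mul_left_cancel₀ (X_ne_zero (R := ℝ) (0 : Fin 3)) h0)
  · rintro ⟨q, hq⟩
    rw [LinearMap.mem_ker, Lm_apply] at hq
    obtain ⟨f, hfi, hc⟩ := ker_struct _ hq
    have hdeg : f.totalDegree ≤ k := by
      apply Finset.sup_le
      intro d hd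
      have hmem : (Finsupp.single (0 : Fin 3) 1 + d) ∈ ((q 0 : P3)).support := by
        rw [mem_support_iff, hc d]; exact mem_support_iff.mp hd
      have hle := le_totalDegree hmem
      have hq0 : ((q 0 : P3)).totalDegree ≤ k + 1 :=
        (mem_restrictTotalDegree _ _ _).mp (q 0).2
      rw [sum_single_add] at hle
      omega
    refine ⟨⟨f, (mem_restrictTotalDegree _ _ _).mpr hdeg⟩, ?_⟩
    apply Subtype.ext
    funext i
    apply Subtype.ext
    simpa [kerMap] using (hfi i).symm

lemma finrank_ker_succ (k : ℕ) :
    Module.finrank ℝ (LinearMap.ker (Lm (k + 1))) = N k :=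
  (LinearEquiv.finrank_eq
    (LinearEquiv.ofBijective (kerMap k) (kerMap_bijective k))).symm

lemma rank_nullity (m : ℕ) :
    Module.finrank ℝ (crossSpace m) + Module.finrank ℝ (LinearMap.ker (Lm m)) = 3 * N m := by
  have h := LinearMap.finrank_range_add_finrank_ker (Lm m)
  rw [range_Lm] at h
  rw [h, Module.finrank_pi_fintype]
  simp [N, Finset.sum_const, mul_comm]

end CrossAux

open CrossAux in
/-- For every `m ≥ 0`, the subspace `{x × q : q ∈ P_m(ℝ³;ℝ³)}` has
dimension `3·dim P_{m+1} − dim P_{m+2} + 1`, equivalently `3·dim P_m − dim P_{m-1}`. -/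
theorem crossSpace_finrank (m : ℕ) :
    (Module.finrank ℝ (crossSpace m) : ℤ)
        = 3 * dP ((m : ℤ) + 1) - dP ((m : ℤ) + 2) + 1 ∧
    (Module.finrank ℝ (crossSpace m) : ℤ)
        = 3 * dP (m : ℤ) - dP ((m : ℤ) - 1) := by
  have key : (Module.finrank ℝ (crossSpace m) : ℤ)
      = 3 * dP (m : ℤ) - dP ((m : ℤ) - 1) := by
    cases m with
    | zero =>
      have h := rank_nullity 0
      rw [ker_zero, finrank_bot, add_zero, N_eq] at h
      rw [h]
      norm_num [dP]
    | succ k =>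
      have h := rank_nullity (k + 1)
      rw [finrank_ker_succ, N_eq, N_eq] at h
      have hcast : ((k : ℤ) + 1) - 1 = (k : ℤ) := by ring
      rw [show ((k + 1 : ℕ) : ℤ) = (k : ℤ) + 1 by push_cast; ring] at *
      rw [hcast, show (k : ℤ) + 1 = ((k + 1 : ℕ) : ℤ) by push_cast; ring,
        dP_cast, dP_cast]
      have h' : (Module.finrank ℝ (crossSpace (k + 1)) : ℤ)
          = 3 * ((k + 1 + 3).choose 3 : ℤ) - ((k + 3).choose 3 : ℤ) := by
        have := congrArg (fun n : ℕ => (n : ℤ)) h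
        push_cast at this ⊢
        omega
      rw [h']
  refine ⟨?_, key⟩
  rw [key]
  -- it remains to prove the arithmetic identity between the two closed forms
  have h1 : (m : ℤ) + 1 = ((m + 1 : ℕ) : ℤ) := by push_cast; ring
  have h2 : (m : ℤ) + 2 = ((m + 2 : ℕ) : ℤ) := by push_cast; ring
  rw [h1, h2, dP_cast, dP_cast]
  cases m with
  | zero =>
    norm_num [dP]
  | succ k =>
    rw [show ((k + 1 : ℕ) : ℤ) = ((k + 1 : ℕ) : ℤ) from rfl]
    rw [show ((k + 1 : ℕ) : ℤ) - 1 = (k : ℤ) by push_cast; ring]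
    rw [dP_cast, dP_cast]
    have hA := six_mul_choose (k + 1)
    have hB := six_mul_choose k
    have hC := six_mul_choose (k + 2)
    have hD := six_mul_choose (k + 3)
    have e6 : 6 * (3 * ((k + 1 + 1 + 3).choose 3 : ℤ) - ((k + 1 + 2 + 3).choose 3 : ℤ) + 1)
        = 6 * (3 * ((k + 1 + 3).choose 3 : ℤ) - ((k + 3).choose 3 : ℤ)) := by
      have hA' : (6 : ℤ) * ((k + 1 + 3).choose 3 : ℤ)
          = ((k : ℤ) + 2) * ((k : ℤ) + 3) * ((k : ℤ) + 4) := by exact_mod_cast by push_cast [hA]; ring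
      have hB' : (6 : ℤ) * ((k + 3).choose 3 : ℤ)
          = ((k : ℤ) + 1) * ((k : ℤ) + 2) * ((k : ℤ) + 3) := by exact_mod_cast by push_cast [hB]; ring
      have hC' : (6 : ℤ) * ((k + 1 + 1 + 3).choose 3 : ℤ)
          = ((k : ℤ) + 3) * ((k : ℤ) + 4) * ((k : ℤ) + 5) := by
        have : k + 1 + 1 + 3 = k + 2 + 3 := by omega
        rw [this]; exact_mod_cast by push_cast [hC]; ring
      have hD' : (6 : ℤ) * ((k + 1 + 2 + 3).choose 3 : ℤ)
          = ((k : ℤ) + 4) * ((k : ℤ) + 5) * ((k : ℤ) + 6) := by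
        have : k + 1 + 2 + 3 = k + 3 + 3 := by omega
        rw [this]; exact_mod_cast by push_cast [hD]; ring
      linear_combination 3 * hC' - hD' - 3 * hA' + hB'
    omega

end
end
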